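/- Let ρ ∈ (0,1), α₀ > 0, and let m, u ≥ 1 be integers. Let φ : ℝ^m → [0,1] be a C^∞ function with compact support, ψ : ℝ^u → [0,1] a C^∞ function supported in the closed unit ball, L : ℝ^u → ℝ a linear form, and A a linear automorphism of ℝ^m with ‖A^{-1}‖ ≤ ρ^{-1}. For n ∈ ℕ define t_n : ℝ^m × ℝ^u → ℝ by t_n(w,z) = ρ^{α₀ n} · φ(A^{-n}w) · ψ(ρ^{-n}z) · L(z). Then: (i) t_n(w,z) = 0 whenever ‖z‖ > ρⁿ or A^{-n}w lies outside the support of φ; (ii) for every α ∈ (0,1] with α < α₀ there exists a constant C > 0, independent of n, such that for all n ∈ ℕ one has sup‖t_n‖ ≤ C ρ^{(1+α₀)n}, sup‖Dt_n‖ ≤ C ρ^{α₀ n}, and Höl_α(Dt_n) ≤ C ρ^{(α₀−α)n}. In particular, for α < α₀ the C^{1+α}-size of t_n tends to 0 as n → ∞. (This is the analytic content of Lemma 6.3.1 of the paper, the twist perturbations T_n(x̄,ȳ,z̄) = (x̄, ȳ + t_n, z̄) converging to the identity in the C^{1+α}-topology.) -/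

import Mathlib

open Metric NNReal

lemma holderWith_of_dist_le {X Y : Type*} [PseudoMetricSpace X] [PseudoMetricSpace Y]
    {C r : ℝ≥0} {f : X → Y} (h : ∀ x y, dist (f x) (f y) ≤ C * dist x y ^ (r : ℝ)) :
    HolderWith C r f := by
  intro x y
  rw [edist_dist, edist_dist, ← ENNReal.ofReal_coe_nnreal,
    ENNReal.ofReal_rpow_of_nonneg dist_nonneg r.coe_nonneg, ← ENNReal.ofReal_mul C.coe_nonneg]
  exact ENNReal.ofReal_le_ofReal (h x y)

lemma min_le_rpow_interp {a b α : ℝ} (ha : 0 ≤ a) (hb : 0 ≤ b) (hα0 : 0 ≤ α) (hα1 : α ≤ 1) :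
    min a b ≤ a ^ (1 - α) * b ^ α := by
  have hm : 0 ≤ min a b := le_min ha hb
  calc min a b = (min a b) ^ (1 - α) * (min a b) ^ α := by
        rw [← Real.rpow_add' hm (by norm_num)]
        · simp
      _ ≤ a ^ (1 - α) * b ^ α :=
        mul_le_mul (Real.rpow_le_rpow hm (min_le_left _ _) (by linarith))
          (Real.rpow_le_rpow hm (min_le_right _ _) hα0) (Real.rpow_nonneg hm α)
          (Real.rpow_nonneg ha _)

set_option maxHeartbeats 1000000 in
/-- Analytic content of Lemma 6.3.1 of the paper: the twist maps
`t_n(w,z) = ρ^{α₀ n} · φ(A^{-n} w) · ψ(ρ^{-n} z) · L(z)` are supported in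
`{‖z‖ ≤ ρⁿ, A^{-n}w ∈ supp φ}` and, for `α < α₀`, their `C^{1+α}`-sizes decay:
`sup|t_n| ≤ C ρ^{(1+α₀)n}`, `sup‖Dt_n‖ ≤ C ρ^{α₀ n}`,
`Höl_α(Dt_n) ≤ C ρ^{(α₀-α)n}`. -/
theorem stmt_2 (m u : ℕ) (hm : 1 ≤ m) (hu : 1 ≤ u)
    (ρ : ℝ) (hρ : ρ ∈ Set.Ioo (0 : ℝ) 1) (α₀ : ℝ) (hα₀ : 0 < α₀)
    (φ : EuclideanSpace ℝ (Fin m) → ℝ) (hφ : ContDiff ℝ (⊤ : ℕ∞) φ)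
    (hφc : HasCompactSupport φ) (hφ01 : ∀ w, φ w ∈ Set.Icc (0 : ℝ) 1)
    (ψ : EuclideanSpace ℝ (Fin u) → ℝ) (hψ : ContDiff ℝ (⊤ : ℕ∞) ψ)
    (hψc : tsupport ψ ⊆ closedBall (0 : EuclideanSpace ℝ (Fin u)) 1)
    (hψ01 : ∀ z, ψ z ∈ Set.Icc (0 : ℝ) 1)
    (L : EuclideanSpace ℝ (Fin u) →L[ℝ] ℝ)
    (A : EuclideanSpace ℝ (Fin m) ≃L[ℝ] EuclideanSpace ℝ (Fin m))
    (hA : ‖(A.symm : EuclideanSpace ℝ (Fin m) →L[ℝ] EuclideanSpace ℝ (Fin m))‖ ≤ ρ⁻¹)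
    (t : ℕ → EuclideanSpace ℝ (Fin m) × EuclideanSpace ℝ (Fin u) → ℝ)
    (ht : ∀ (n : ℕ) (w : EuclideanSpace ℝ (Fin m)) (z : EuclideanSpace ℝ (Fin u)),
      t n (w, z) = ρ ^ (α₀ * (n : ℝ)) * φ ((⇑A.symm)^[n] w) * ψ ((ρ ^ n)⁻¹ • z) * L z) :
    -- (i) support of `t_n`
    (∀ (n : ℕ) (w : EuclideanSpace ℝ (Fin m)) (z : EuclideanSpace ℝ (Fin u)),
        (ρ ^ n < ‖z‖ ∨ (⇑A.symm)^[n] w ∉ tsupport φ) → t n (w, z) = 0) ∧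
    -- (ii) decay of the `C^{1+α}`-size for `α < α₀`
    (∀ α : ℝ≥0, 0 < α → α ≤ 1 → (α : ℝ) < α₀ →
      ∃ C : ℝ, 0 < C ∧ ∀ n : ℕ,
        (∀ p, |t n p| ≤ C * ρ ^ ((1 + α₀) * (n : ℝ))) ∧
        (∀ p, ‖fderiv ℝ (t n) p‖ ≤ C * ρ ^ (α₀ * (n : ℝ))) ∧
        HolderWith (C * ρ ^ ((α₀ - (α : ℝ)) * (n : ℝ))).toNNReal α
          (fun p => fderiv ℝ (t n) p)) := by
  obtain ⟨hρ0, hρ1⟩ := hρ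
  have hρn : ∀ n : ℕ, (0:ℝ) < ρ ^ n := fun n => pow_pos hρ0 n
  -- part (i)
  have hzero : ∀ (n : ℕ) (w : EuclideanSpace ℝ (Fin m)) (z : EuclideanSpace ℝ (Fin u)),
      (ρ ^ n < ‖z‖ ∨ (⇑A.symm)^[n] w ∉ tsupport φ) → t n (w, z) = 0 := by
    intro n w z h
    rw [ht]
    rcases h with h | h
    · have : ψ ((ρ ^ n)⁻¹ • z) = 0 := by
        apply image_eq_zero_of_notMem_tsupport
        intro hmem
        have := mem_closedBall_zero_iff.1 (hψc hmem)
        rw [norm_smul, norm_inv, Real.norm_eq_abs, abs_of_pos (hρn n)] at this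
        rw [inv_mul_le_iff₀ (hρn n), mul_one] at this
        linarith
      simp [this]
    · have : φ ((⇑A.symm)^[n] w) = 0 := image_eq_zero_of_notMem_tsupport h
      simp [this]
  refine ⟨hzero, ?_⟩
  -- part (ii)
  intro α hα0' hα1' hαlt
  have hα0 : (0:ℝ) < (α:ℝ) := hα0'
  have hα1 : (α:ℝ) ≤ 1 := by exact_mod_cast hα1'
  -- the contracting linear maps
  set S : EuclideanSpace ℝ (Fin m) →L[ℝ] EuclideanSpace ℝ (Fin m) :=
    (A.symm : EuclideanSpace ℝ (Fin m) →L[ℝ] EuclideanSpace ℝ (Fin m)) with hS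
  have hSpow : ∀ (n : ℕ) (w : EuclideanSpace ℝ (Fin m)), (S ^ n) w = (⇑A.symm)^[n] w := by
    intro n w
    rw [ContinuousLinearMap.coe_pow']
    rfl
  have hinvnn : (0:ℝ) ≤ ρ⁻¹ := inv_nonneg.2 hρ0.le
  have hSnorm : ∀ n : ℕ, ‖S ^ n‖ ≤ ρ⁻¹ ^ n := by
    intro n
    induction n with
    | zero =>
      rw [pow_zero, pow_zero, ContinuousLinearMap.one_def]
      exact ContinuousLinearMap.norm_id_le
    | succ n ih =>
      rw [pow_succ, pow_succ]
      exact le_trans (norm_mul_le _ _)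
        (mul_le_mul ih hA (norm_nonneg _) (pow_nonneg hinvnn n))
  set Λ : ℕ → (EuclideanSpace ℝ (Fin m) × EuclideanSpace ℝ (Fin u) →L[ℝ]
      EuclideanSpace ℝ (Fin m) × EuclideanSpace ℝ (Fin u)) :=
    fun n => (S ^ n).prodMap ((ρ ^ n)⁻¹ • ContinuousLinearMap.id ℝ (EuclideanSpace ℝ (Fin u)))
    with hΛdef
  have hΛapp : ∀ (n : ℕ) (p : EuclideanSpace ℝ (Fin m) × EuclideanSpace ℝ (Fin u)),
      Λ n p = ((S ^ n) p.1, (ρ ^ n)⁻¹ • p.2) := by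
    intro n p
    simp [hΛdef, ContinuousLinearMap.coe_prodMap', Prod.map, ContinuousLinearMap.coe_smul',
      Pi.smul_apply]
  have hΛle : ∀ (n : ℕ) (p : EuclideanSpace ℝ (Fin m) × EuclideanSpace ℝ (Fin u)),
      ‖Λ n p‖ ≤ ρ⁻¹ ^ n * ‖p‖ := by
    intro n p
    rw [hΛapp, Prod.norm_def]
    apply max_le
    · exact le_trans ((S ^ n).le_opNorm _)
        (mul_le_mul (hSnorm n) (norm_fst_le p) (norm_nonneg _) (pow_nonneg hinvnn n))
    · rw [norm_smul, norm_inv, Real.norm_eq_abs, abs_of_pos (hρn n), ← inv_pow]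
      exact mul_le_mul_of_nonneg_left (norm_snd_le p) (pow_nonneg hinvnn n)
  have hΛnorm : ∀ n : ℕ, ‖Λ n‖ ≤ ρ⁻¹ ^ n :=
    fun n => ContinuousLinearMap.opNorm_le_bound _ (pow_nonneg hinvnn n) (hΛle n)
  -- the fixed profile function F
  set F : EuclideanSpace ℝ (Fin m) × EuclideanSpace ℝ (Fin u) → ℝ :=
    fun p => φ p.1 * (ψ p.2 * L p.2) with hF
  have hFsm : ContDiff ℝ (⊤ : ℕ∞) F :=
    (hφ.comp contDiff_fst).mul ((hψ.comp contDiff_snd).mul (L.contDiff.comp contDiff_snd))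
  have hFsupp : HasCompactSupport F := by
    apply HasCompactSupport.intro
      (hφc.prod (isCompact_closedBall (0 : EuclideanSpace ℝ (Fin u)) 1))
    intro p hp
    rw [Set.mem_prod, not_and_or] at hp
    rcases hp with hp | hp
    · have : φ p.1 = 0 := image_eq_zero_of_notMem_tsupport hp
      simp [hF, this]
    · have : ψ p.2 = 0 := image_eq_zero_of_notMem_tsupport (fun h => hp (hψc h))
      simp [hF, this]
  set G := fderiv ℝ F with hG
  have hGsm : ContDiff ℝ (⊤ : ℕ∞) G := hFsm.fderiv_right (by simp)
  have hGsupp : HasCompactSupport G := hFsupp.fderiv ℝ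
  obtain ⟨M₀, hM₀⟩ := hFsupp.exists_bound_of_continuous hFsm.continuous
  obtain ⟨M₁, hM₁⟩ := hGsupp.exists_bound_of_continuous hGsm.continuous
  obtain ⟨M₂, hM₂'⟩ := ((hGsupp.fderiv ℝ).isCompact_range
    (hGsm.fderiv_right (m := (⊤ : ℕ∞)) (by simp)).continuous).isBounded.exists_norm_le
  have hM₂ : ∀ x, ‖fderiv ℝ G x‖ ≤ M₂ := fun x => hM₂' _ (Set.mem_range_self x)
  set N₀ : ℝ := max M₀ 1 with hN₀def
  set N₁ : ℝ := max M₁ 1 with hN₁def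
  set N₂ : ℝ := max M₂ 1 with hN₂def
  have hN₀1 : (1:ℝ) ≤ N₀ := le_max_right _ _
  have hN₁1 : (1:ℝ) ≤ N₁ := le_max_right _ _
  have hN₂1 : (1:ℝ) ≤ N₂ := le_max_right _ _
  have hN₀ : ∀ p, ‖F p‖ ≤ N₀ := fun p => le_trans (hM₀ p) (le_max_left _ _)
  have hN₁ : ∀ p, ‖G p‖ ≤ N₁ := fun p => le_trans (hM₁ p) (le_max_left _ _)
  have hGlip : ∀ x y, ‖G x - G y‖ ≤ N₂ * ‖x - y‖ := by
    intro x y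
    exact convex_univ.norm_image_sub_le_of_norm_fderiv_le
      (fun z _ => (hGsm.differentiable (by simp)) z)
      (fun z _ => le_trans (hM₂ z) (le_max_left _ _)) (Set.mem_univ y) (Set.mem_univ x)
  -- rewriting t n through F and Λ n
  have hcancel : ∀ n : ℕ, (ρ:ℝ) ^ n * ρ⁻¹ ^ n = 1 := by
    intro n
    rw [← mul_pow, mul_inv_cancel₀ hρ0.ne', one_pow]
  have hteq : ∀ n : ℕ, t n = fun p => (ρ ^ (α₀ * (n:ℝ)) * ρ ^ n) * F (Λ n p) := by
    intro n
    funext p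
    obtain ⟨w, z⟩ := p
    rw [ht n w z]
    have h1 : Λ n (w, z) = ((S ^ n) w, (ρ ^ n)⁻¹ • z) := hΛapp n (w, z)
    rw [h1]
    simp only [hF, hSpow, map_smul, smul_eq_mul]
    field_simp
  have hdiff : ∀ (n : ℕ) p, HasFDerivAt (t n)
      ((ρ ^ (α₀ * (n:ℝ)) * ρ ^ n) • ((G (Λ n p)).comp (Λ n))) p := by
    intro n p
    rw [hteq n]
    exact (((hFsm.differentiable (by simp)) (Λ n p)).hasFDerivAt.comp p
      ((Λ n).hasFDerivAt)).const_mul _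
  have hfd : ∀ (n : ℕ) p, fderiv ℝ (t n) p
      = (ρ ^ (α₀ * (n:ℝ)) * ρ ^ n) • ((G (Λ n p)).comp (Λ n)) :=
    fun n p => (hdiff n p).fderiv
  -- positivity and exponent bookkeeping
  have hcn : ∀ n : ℕ, (0:ℝ) < ρ ^ (α₀ * (n:ℝ)) * ρ ^ n :=
    fun n => mul_pos (Real.rpow_pos_of_pos hρ0 _) (hρn n)
  have hexp1 : ∀ n : ℕ, ρ ^ ((1 + α₀) * (n:ℝ)) = ρ ^ (α₀ * (n:ℝ)) * ρ ^ n := by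
    intro n
    rw [← Real.rpow_natCast ρ n, ← Real.rpow_add hρ0]
    congr 1
    ring
  have hexp2 : ∀ n : ℕ, ρ ^ (α₀ * (n:ℝ)) * ρ ^ n * ρ⁻¹ ^ n * (ρ⁻¹ ^ n) ^ (α:ℝ)
      = ρ ^ ((α₀ - (α:ℝ)) * (n:ℝ)) := by
    intro n
    have h3 : (ρ⁻¹:ℝ) ^ n = ρ ^ (-(n:ℝ)) := by
      rw [inv_pow, ← Real.rpow_natCast ρ n, ← Real.rpow_neg hρ0.le]
    have h4 : (ρ:ℝ) ^ n = ρ ^ ((n:ℝ)) := (Real.rpow_natCast ρ n).symm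
    rw [h3, h4, ← Real.rpow_mul hρ0.le, ← Real.rpow_add hρ0, ← Real.rpow_add hρ0,
      ← Real.rpow_add hρ0]
    congr 1
    ring
  -- the constant
  set Kα : ℝ := (2 * N₁) ^ (1 - (α:ℝ)) * N₂ ^ (α:ℝ) with hKαdef
  have hKα0 : 0 < Kα :=
    mul_pos (Real.rpow_pos_of_pos (by linarith) _) (Real.rpow_pos_of_pos (by linarith) _)
  refine ⟨max (max N₀ N₁) Kα, lt_of_lt_of_le hKα0 (le_max_right _ _), ?_⟩
  intro n
  set C : ℝ := max (max N₀ N₁) Kα with hCdef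
  have hCN₀ : N₀ ≤ C := le_trans (le_max_left _ _) (le_max_left _ _)
  have hCN₁ : N₁ ≤ C := le_trans (le_max_right _ _) (le_max_left _ _)
  have hCKα : Kα ≤ C := le_max_right _ _
  refine ⟨?_, ?_, ?_⟩
  · -- sup bound
    intro p
    rw [hteq n, hexp1 n]
    calc |(ρ ^ (α₀ * (n:ℝ)) * ρ ^ n) * F (Λ n p)|
        = (ρ ^ (α₀ * (n:ℝ)) * ρ ^ n) * |F (Λ n p)| := by
          rw [abs_mul, abs_of_pos (hcn n)]
      _ ≤ (ρ ^ (α₀ * (n:ℝ)) * ρ ^ n) * N₀ :=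
          mul_le_mul_of_nonneg_left (hN₀ _) (hcn n).le
      _ ≤ (ρ ^ (α₀ * (n:ℝ)) * ρ ^ n) * C :=
          mul_le_mul_of_nonneg_left (le_trans hCN₀ le_rfl) (hcn n).le
      _ = C * (ρ ^ (α₀ * (n:ℝ)) * ρ ^ n) := mul_comm _ _
  · -- derivative bound
    intro p
    rw [hfd n p, norm_smul, Real.norm_eq_abs, abs_of_pos (hcn n)]
    calc (ρ ^ (α₀ * (n:ℝ)) * ρ ^ n) * ‖(G (Λ n p)).comp (Λ n)‖
        ≤ (ρ ^ (α₀ * (n:ℝ)) * ρ ^ n) * (N₁ * ρ⁻¹ ^ n) := by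
          apply mul_le_mul_of_nonneg_left _ (hcn n).le
          exact le_trans (ContinuousLinearMap.opNorm_comp_le _ _)
            (mul_le_mul (hN₁ _) (hΛnorm n) (norm_nonneg _) (by linarith))
      _ = N₁ * (ρ ^ (α₀ * (n:ℝ)) * (ρ ^ n * ρ⁻¹ ^ n)) := by ring
      _ = N₁ * ρ ^ (α₀ * (n:ℝ)) := by rw [hcancel n, mul_one]
      _ ≤ C * ρ ^ (α₀ * (n:ℝ)) :=
          mul_le_mul_of_nonneg_right hCN₁ (Real.rpow_pos_of_pos hρ0 _).le
  · -- Hölder bound on the derivative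
    have hnn : 0 ≤ C * ρ ^ ((α₀ - (α:ℝ)) * (n:ℝ)) :=
      mul_nonneg (le_trans (by linarith) hCN₁) (Real.rpow_pos_of_pos hρ0 _).le
    apply holderWith_of_dist_le
    intro p q
    rw [Real.coe_toNNReal _ hnn, dist_eq_norm, dist_eq_norm]
    rw [hfd n p, hfd n q, show ∀ (c : ℝ) (f g : EuclideanSpace ℝ (Fin m) × EuclideanSpace ℝ (Fin u) →L[ℝ] ℝ),
      c • f.comp (Λ n) - c • g.comp (Λ n) = c • (f - g).comp (Λ n) from
      fun c f g => ContinuousLinearMap.ext fun x => by simp [mul_sub]]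
    rw [norm_smul, Real.norm_eq_abs, abs_of_pos (hcn n)]
    have hΔ : ‖G (Λ n p) - G (Λ n q)‖
        ≤ min (2 * N₁) (N₂ * (ρ⁻¹ ^ n * ‖p - q‖)) := by
      refine le_min ?_ ?_
      · calc ‖G (Λ n p) - G (Λ n q)‖ ≤ ‖G (Λ n p)‖ + ‖G (Λ n q)‖ := norm_sub_le _ _
          _ ≤ 2 * N₁ := by have := hN₁ (Λ n p); have := hN₁ (Λ n q); linarith
      · calc ‖G (Λ n p) - G (Λ n q)‖ ≤ N₂ * ‖Λ n p - Λ n q‖ := hGlip _ _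
          _ ≤ N₂ * (ρ⁻¹ ^ n * ‖p - q‖) := by
              apply mul_le_mul_of_nonneg_left _ (by linarith)
              rw [← map_sub]
              exact hΛle n _
    have hinterp : ‖G (Λ n p) - G (Λ n q)‖
        ≤ (2 * N₁) ^ (1 - (α:ℝ)) * (N₂ * (ρ⁻¹ ^ n * ‖p - q‖)) ^ (α:ℝ) :=
      le_trans hΔ (min_le_rpow_interp (by linarith)
        (mul_nonneg (by linarith) (mul_nonneg (pow_nonneg hinvnn n) (norm_nonneg _)))
        hα0.le hα1)
    have hsplit : (N₂ * (ρ⁻¹ ^ n * ‖p - q‖)) ^ (α:ℝ)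
        = N₂ ^ (α:ℝ) * ((ρ⁻¹ ^ n) ^ (α:ℝ) * ‖p - q‖ ^ (α:ℝ)) := by
      rw [Real.mul_rpow (by linarith) (mul_nonneg (pow_nonneg hinvnn n) (norm_nonneg _)),
        Real.mul_rpow (pow_nonneg hinvnn n) (norm_nonneg _)]
    calc (ρ ^ (α₀ * (n:ℝ)) * ρ ^ n) * ‖(G (Λ n p) - G (Λ n q)).comp (Λ n)‖
        ≤ (ρ ^ (α₀ * (n:ℝ)) * ρ ^ n) * (‖G (Λ n p) - G (Λ n q)‖ * ρ⁻¹ ^ n) := by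
          apply mul_le_mul_of_nonneg_left _ (hcn n).le
          exact le_trans (ContinuousLinearMap.opNorm_comp_le _ _)
            (mul_le_mul_of_nonneg_left (hΛnorm n) (norm_nonneg _))
      _ ≤ (ρ ^ (α₀ * (n:ℝ)) * ρ ^ n) *
            (((2 * N₁) ^ (1 - (α:ℝ)) * (N₂ * (ρ⁻¹ ^ n * ‖p - q‖)) ^ (α:ℝ)) * ρ⁻¹ ^ n) := by
          apply mul_le_mul_of_nonneg_left _ (hcn n).le
          exact mul_le_mul_of_nonneg_right hinterp (pow_nonneg hinvnn n)
      _ = Kα * (ρ ^ (α₀ * (n:ℝ)) * ρ ^ n * ρ⁻¹ ^ n * (ρ⁻¹ ^ n) ^ (α:ℝ)) * ‖p - q‖ ^ (α:ℝ) := by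
          rw [hsplit, hKαdef]; ring
      _ = Kα * ρ ^ ((α₀ - (α:ℝ)) * (n:ℝ)) * ‖p - q‖ ^ (α:ℝ) := by rw [hexp2 n]
      _ ≤ C * ρ ^ ((α₀ - (α:ℝ)) * (n:ℝ)) * ‖p - q‖ ^ (α:ℝ) := by
          apply mul_le_mul_of_nonneg_right _ (Real.rpow_nonneg (norm_nonneg _) _)
          exact mul_le_mul_of_nonneg_right hCKα (Real.rpow_pos_of_pos hρ0 _).le
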